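/- arXiv:2303.15073 — 2 statements merged into one kernel-verified Lean document; each statement's English description precedes it below -/
import Mathlib

section
/- Suppose F is nonempty, ℓ* is finite, and the RLT relaxation is exact (ℓ*_R = ℓ*). Then there exists a point v lying on a minimal face of F such that (v, v v^T) is an optimal solution of the RLT relaxation. Moreover, every point x̂ ∈ F lying on that same minimal face is an optimal solution of the quadratic program. -/
open Matrix


lemma aux_mul_vv {k l n : ℕ} (A : Matrix (Fin k) (Fin n) ℝ) (u : Fin n → ℝ) (w : Fin l → ℝ) :
    A * vecMulVec u w = vecMulVec (A.mulVec u) w := by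
  ext i j
  simp [Matrix.mul_apply, vecMulVec_apply, mulVec, dotProduct, Finset.sum_mul, mul_assoc]

lemma aux_vv_mul {k l n : ℕ} (B : Matrix (Fin n) (Fin l) ℝ) (u : Fin k → ℝ) (w : Fin n → ℝ) :
    vecMulVec u w * B = vecMulVec u (Bᵀ.mulVec w) := by
  ext i j
  simp [Matrix.mul_apply, vecMulVec_apply, mulVec, dotProduct, Finset.mul_sum, mul_assoc,
    mul_comm, mul_left_comm]

lemma aux_trace_vv {n : ℕ} (Q : Matrix (Fin n) (Fin n) ℝ) (u w : Fin n → ℝ) :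
    (Qᵀ * vecMulVec u w).trace = u ⬝ᵥ Q.mulVec w := by
  simp [Matrix.trace, Matrix.mul_apply, vecMulVec_apply, mulVec, dotProduct, Finset.mul_sum, diag]
  rw [Finset.sum_comm]
  congr 1; ext j; congr 1; ext i; ring

lemma aux_dot_symm {n : ℕ} (Q : Matrix (Fin n) (Fin n) ℝ) (hQ : Q.IsSymm) (u w : Fin n → ℝ) :
    u ⬝ᵥ Q.mulVec w = w ⬝ᵥ Q.mulVec u := by
  have h : ∀ i j, Q i j = Q j i := fun i j => (Matrix.IsSymm.apply hQ j i)
  simp only [dotProduct, mulVec, Finset.mul_sum]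
  rw [Finset.sum_comm]
  congr 1; ext j; congr 1; ext i; rw [h j i]; ring

lemma aux_rlt_entry {n m : ℕ} (G : Matrix (Fin n) (Fin m) ℝ) (g : Fin m → ℝ)
    (u w : Fin n → ℝ) (i j : Fin m) :
    (Gᵀ * ((2⁻¹ : ℝ) • (vecMulVec u w + vecMulVec w u)) * G
      - vecMulVec (Gᵀ.mulVec ((2⁻¹ : ℝ) • (u + w))) g
      - vecMulVec g (Gᵀ.mulVec ((2⁻¹ : ℝ) • (u + w))) + vecMulVec g g) i j
    = 2⁻¹ * ((Gᵀ.mulVec u i - g i) * (Gᵀ.mulVec w j - g j)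
        + (Gᵀ.mulVec w i - g i) * (Gᵀ.mulVec u j - g j)) := by
  rw [Matrix.mul_smul, Matrix.smul_mul, Matrix.mul_add, Matrix.add_mul,
    aux_mul_vv, aux_mul_vv, aux_vv_mul, aux_vv_mul]
  simp only [Matrix.sub_apply, Matrix.add_apply, Matrix.smul_apply, vecMulVec_apply,
    mulVec_smul, mulVec_add, Pi.smul_apply, Pi.add_apply, smul_eq_mul]
  ring

lemma aux_rlt_entry_self {n m : ℕ} (G : Matrix (Fin n) (Fin m) ℝ) (g : Fin m → ℝ)
    (v : Fin n → ℝ) (i j : Fin m) :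
    (Gᵀ * vecMulVec v v * G - vecMulVec (Gᵀ.mulVec v) g
      - vecMulVec g (Gᵀ.mulVec v) + vecMulVec g g) i j
    = (Gᵀ.mulVec v i - g i) * (Gᵀ.mulVec v j - g j) := by
  rw [aux_mul_vv, aux_vv_mul]
  simp only [Matrix.sub_apply, Matrix.add_apply, vecMulVec_apply]
  ring


/-- If `F` is nonempty, `ℓ*` is finite (attained at `xstar`), and the RLT relaxation is
exact, then there is a point `v` on a minimal face of `F` such that `(v, v vᵀ)` is
optimal for the RLT relaxation; moreover every point of `F` on that minimal face is an
optimal solution of the quadratic program. (Minimal faces of `F` are exactly the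
nonempty affine subspaces of the form `{x : (G⁰)ᵀ x = g⁰, Hᵀ x = h}` contained in `F`.) -/
theorem stmt_17 {n m p : ℕ} (Q : Matrix (Fin n) (Fin n) ℝ) (hQ : Q.IsSymm)
    (c : Fin n → ℝ) (G : Matrix (Fin n) (Fin m) ℝ) (H : Matrix (Fin n) (Fin p) ℝ)
    (g : Fin m → ℝ) (h : Fin p → ℝ)
    (F : Set (Fin n → ℝ)) (hF : F = {x | Gᵀ.mulVec x ≤ g ∧ Hᵀ.mulVec x = h})
    (hne : F.Nonempty)
    (q : (Fin n → ℝ) → ℝ) (hq : q = fun x => 1 / 2 * (x ⬝ᵥ Q.mulVec x) + c ⬝ᵥ x)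
    -- ℓ* is finite and attained at xstar
    (xstar : Fin n → ℝ) (hxstar : xstar ∈ F) (hopt : ∀ x ∈ F, q xstar ≤ q x)
    (cF : Set ((Fin n → ℝ) × Matrix (Fin n) (Fin n) ℝ))
    (hcF : cF = {z | z.2.IsSymm ∧ Gᵀ.mulVec z.1 ≤ g ∧ Hᵀ.mulVec z.1 = h ∧
      Hᵀ * z.2 = vecMulVec h z.1 ∧
      ∀ i j, 0 ≤ (Gᵀ * z.2 * G - vecMulVec (Gᵀ.mulVec z.1) g
        - vecMulVec g (Gᵀ.mulVec z.1) + vecMulVec g g) i j})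
    (objR : (Fin n → ℝ) × Matrix (Fin n) (Fin n) ℝ → ℝ)
    (hobjR : objR = fun z => 1 / 2 * (Qᵀ * z.2).trace + c ⬝ᵥ z.1)
    -- exactness: ℓ*_R = ℓ* (since ℓ*_R ≤ ℓ* always holds, exactness means
    -- ℓ* is a lower bound on the RLT objective over 𝓕)
    (hexact : ∀ z ∈ cF, q xstar ≤ objR z) :
    ∃ (J : Set (Fin m)) (v : Fin n → ℝ),
      {x : Fin n → ℝ | (∀ j ∈ J, Gᵀ.mulVec x j = g j) ∧ Hᵀ.mulVec x = h} ⊆ F ∧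
      ((∀ j ∈ J, Gᵀ.mulVec v j = g j) ∧ Hᵀ.mulVec v = h) ∧
      (v, vecMulVec v v) ∈ cF ∧
      (∀ z ∈ cF, objR (v, vecMulVec v v) ≤ objR z) ∧
      ∀ x', ((∀ j ∈ J, Gᵀ.mulVec x' j = g j) ∧ Hᵀ.mulVec x' = h) →
        x' ∈ F ∧ ∀ x ∈ F, q x' ≤ q x := by
  have hFmem : ∀ x, x ∈ F ↔ (Gᵀ.mulVec x ≤ g ∧ Hᵀ.mulVec x = h) := by
    intro x; rw [hF]; rfl
  have hqx : ∀ x, q x = 1 / 2 * (x ⬝ᵥ Q.mulVec x) + c ⬝ᵥ x := by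
    intro x; rw [hq]
  -- Key inequality E from RLT exactness
  have E : ∀ u, u ∈ F → ∀ w, w ∈ F →
      q xstar ≤ 2⁻¹ * (u ⬝ᵥ Q.mulVec w) + 2⁻¹ * (c ⬝ᵥ u) + 2⁻¹ * (c ⬝ᵥ w) := by
    intro u hu w hw
    rw [hFmem] at hu hw
    have hz : ((2⁻¹ : ℝ) • (u + w), (2⁻¹ : ℝ) • (vecMulVec u w + vecMulVec w u)) ∈ cF := by
      rw [hcF]
      refine ⟨?_, ?_, ?_, ?_, ?_⟩
      · show _ᵀ = _
        ext i j
        simp [vecMulVec_apply]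
        ring
      · intro j
        have h1 := hu.1 j
        have h2 := hw.1 j
        simp only [mulVec_smul, mulVec_add, Pi.smul_apply, Pi.add_apply, smul_eq_mul]
        linarith
      · rw [mulVec_smul, mulVec_add, hu.2, hw.2]
        ext i; simp; ring
      · show Hᵀ * _ = _
        rw [Matrix.mul_smul, Matrix.mul_add, aux_mul_vv, aux_mul_vv, hu.2, hw.2]
        ext i j
        simp [vecMulVec_apply]
        ring
      · intro i j
        show (0:ℝ) ≤ _
        rw [aux_rlt_entry]
        have a1 : Gᵀ.mulVec u i - g i ≤ 0 := by linarith [hu.1 i]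
        have a2 : Gᵀ.mulVec w j - g j ≤ 0 := by linarith [hw.1 j]
        have a3 : Gᵀ.mulVec w i - g i ≤ 0 := by linarith [hw.1 i]
        have a4 : Gᵀ.mulVec u j - g j ≤ 0 := by linarith [hu.1 j]
        nlinarith
    have hle := hexact _ hz
    rw [hobjR] at hle
    simp only at hle
    rw [Matrix.mul_smul, Matrix.mul_add, trace_smul, trace_add, aux_trace_vv, aux_trace_vv,
      aux_dot_symm Q hQ w u] at hle
    simp only [smul_eq_mul, dotProduct_smul, dotProduct_add] at hle
    linarith
  -- q in symmetric bilinear form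
  have qS : ∀ x : Fin n → ℝ, q x = 2⁻¹ * (x ⬝ᵥ Q.mulVec x) + 2⁻¹ * (c ⬝ᵥ x) + 2⁻¹ * (c ⬝ᵥ x) := by
    intro x; rw [hqx]; ring
  have expand : ∀ (v d : Fin n → ℝ) (α β : ℝ),
      2⁻¹ * ((v + α • d) ⬝ᵥ Q.mulVec (v + β • d)) + 2⁻¹ * (c ⬝ᵥ (v + α • d))
        + 2⁻¹ * (c ⬝ᵥ (v + β • d))
      = (2⁻¹ * (v ⬝ᵥ Q.mulVec v) + 2⁻¹ * (c ⬝ᵥ v) + 2⁻¹ * (c ⬝ᵥ v))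
        + (α + β) * (2⁻¹ * (d ⬝ᵥ Q.mulVec v + c ⬝ᵥ d))
        + α * β * (2⁻¹ * (d ⬝ᵥ Q.mulVec d)) := by
    intro v d α β
    simp only [mulVec_add, mulVec_smul, dotProduct_add, add_dotProduct, smul_dotProduct,
      dotProduct_smul, smul_eq_mul]
    rw [aux_dot_symm Q hQ v d]
    ring
  -- two-sided feasibility yields constancy of q along the line
  have L : ∀ v, v ∈ F → q v = q xstar → ∀ d (ε : ℝ), 0 < ε → v + ε • d ∈ F → v - ε • d ∈ F →
      ∀ t : ℝ, q (v + t • d) = q xstar := by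
    intro v hv hqv d ε hε hp hm t
    have hmm : v - ε • d = v + (-ε) • d := by
      ext i; simp [sub_eq_add_neg]
    rw [hmm] at hm
    have e1 := E _ hp _ hp
    have e2 := E _ hm _ hm
    have e3 := E _ hm _ hp
    rw [expand v d ε ε] at e1
    rw [expand v d (-ε) (-ε)] at e2
    rw [expand v d (-ε) ε] at e3
    rw [← qS v, hqv] at e1 e2 e3
    have hC0 : 2⁻¹ * (d ⬝ᵥ Q.mulVec d) = 0 := by
      have h1 : ε * ε * (2⁻¹ * (d ⬝ᵥ Q.mulVec d)) = 0 :=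
        le_antisymm (by linarith) (by linarith)
      exact (mul_eq_zero.mp h1).resolve_left (mul_pos hε hε).ne'
    have hB0 : 2⁻¹ * (d ⬝ᵥ Q.mulVec v + c ⬝ᵥ d) = 0 := by
      rw [hC0] at e1 e2
      have h1 : ε * (2⁻¹ * (d ⬝ᵥ Q.mulVec v + c ⬝ᵥ d)) = 0 :=
        le_antisymm (by linarith) (by linarith)
      exact (mul_eq_zero.mp h1).resolve_left hε.ne'
    rw [qS, expand v d t t, ← qS v, hqv, hB0, hC0]
    ring
  -- two-sided epsilon
  have eps : ∀ v, v ∈ F → ∀ d, Hᵀ.mulVec d = 0 →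
      (∀ j, Gᵀ.mulVec v j = g j → Gᵀ.mulVec d j = 0) →
      ∃ ε : ℝ, 0 < ε ∧ v + ε • d ∈ F ∧ v - ε • d ∈ F := by
    intro v hv d hdH hdJ
    rw [hFmem] at hv
    have main : ∀ s : Finset (Fin m), ∃ ε : ℝ, 0 < ε ∧
        ∀ j ∈ s, ε * |Gᵀ.mulVec d j| ≤ g j - Gᵀ.mulVec v j := by
      intro s
      induction s using Finset.induction with
      | empty => exact ⟨1, one_pos, by simp⟩
      | @insert a s ha ih =>
        obtain ⟨ε, hε, hεs⟩ := ih
        by_cases hda : Gᵀ.mulVec d a = 0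
        · refine ⟨ε, hε, ?_⟩
          intro j hj
          rcases Finset.mem_insert.mp hj with hj | hj
          · subst hj
            rw [hda]
            simp
            linarith [hv.1 j]
          · exact hεs j hj
        · have hlt : Gᵀ.mulVec v a < g a :=
            lt_of_le_of_ne (hv.1 a) (fun hh => hda (hdJ a hh))
          have habs : 0 < |Gᵀ.mulVec d a| := abs_pos.mpr hda
          refine ⟨min ε ((g a - Gᵀ.mulVec v a) / |Gᵀ.mulVec d a|),
            lt_min hε (div_pos (by linarith) habs), ?_⟩
          intro j hj
          rcases Finset.mem_insert.mp hj with hj | hj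
          · subst hj
            calc min ε ((g j - Gᵀ.mulVec v j) / |Gᵀ.mulVec d j|) * |Gᵀ.mulVec d j|
                ≤ ((g j - Gᵀ.mulVec v j) / |Gᵀ.mulVec d j|) * |Gᵀ.mulVec d j| := by
                  apply mul_le_mul_of_nonneg_right (min_le_right _ _) (abs_nonneg _)
              _ = g j - Gᵀ.mulVec v j := div_mul_cancel₀ _ (ne_of_gt habs)
          · calc min ε ((g a - Gᵀ.mulVec v a) / |Gᵀ.mulVec d a|) * |Gᵀ.mulVec d j|
                ≤ ε * |Gᵀ.mulVec d j| :=
                  mul_le_mul_of_nonneg_right (min_le_left _ _) (abs_nonneg _)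
              _ ≤ g j - Gᵀ.mulVec v j := hεs j hj
    obtain ⟨ε, hε, hεs⟩ := main Finset.univ
    refine ⟨ε, hε, ?_, ?_⟩
    · rw [hFmem]
      constructor
      · intro j
        have h1 := hεs j (Finset.mem_univ j)
        have h2 := le_abs_self (Gᵀ.mulVec d j)
        simp only [mulVec_add, mulVec_smul, Pi.add_apply, Pi.smul_apply, smul_eq_mul]
        nlinarith
      · rw [mulVec_add, mulVec_smul, hdH, hv.2]; ext i; simp
    · rw [hFmem]
      constructor
      · intro j
        have h1 := hεs j (Finset.mem_univ j)
        have h2 := neg_abs_le (Gᵀ.mulVec d j)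
        simp only [mulVec_sub, mulVec_smul, Pi.sub_apply, Pi.smul_apply, smul_eq_mul]
        nlinarith
      · rw [mulVec_sub, mulVec_smul, hdH, hv.2]; ext i; simp
  -- membership of (v, v vᵀ) in cF
  have mem_vv : ∀ v, v ∈ F → (v, vecMulVec v v) ∈ cF := by
    intro v hv
    rw [hFmem] at hv
    rw [hcF]
    refine ⟨?_, hv.1, hv.2, ?_, ?_⟩
    · show _ᵀ = _
      ext i j; simp [vecMulVec_apply]; ring
    · show Hᵀ * _ = _
      rw [aux_mul_vv, hv.2]
    · intro i j
      show (0:ℝ) ≤ _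
      rw [aux_rlt_entry_self]
      have a1 : Gᵀ.mulVec v i - g i ≤ 0 := by linarith [hv.1 i]
      have a2 : Gᵀ.mulVec v j - g j ≤ 0 := by linarith [hv.1 j]
      nlinarith
  have obj_vv : ∀ v : Fin n → ℝ, objR (v, vecMulVec v v) = q v := by
    intro v
    rw [hobjR, hqx]
    simp only
    rw [aux_trace_vv]
  -- the conclusion holds for any optimal v whose active-set face is inside F
  have main : ∀ v, v ∈ F → q v = q xstar →
      ({x : Fin n → ℝ | (∀ j ∈ {j | Gᵀ.mulVec v j = g j}, Gᵀ.mulVec x j = g j)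
        ∧ Hᵀ.mulVec x = h} ⊆ F) →
      (∃ (J : Set (Fin m)) (v : Fin n → ℝ),
        {x : Fin n → ℝ | (∀ j ∈ J, Gᵀ.mulVec x j = g j) ∧ Hᵀ.mulVec x = h} ⊆ F ∧
        ((∀ j ∈ J, Gᵀ.mulVec v j = g j) ∧ Hᵀ.mulVec v = h) ∧
        (v, vecMulVec v v) ∈ cF ∧
        (∀ z ∈ cF, objR (v, vecMulVec v v) ≤ objR z) ∧
        ∀ x', ((∀ j ∈ J, Gᵀ.mulVec x' j = g j) ∧ Hᵀ.mulVec x' = h) →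
          x' ∈ F ∧ ∀ x ∈ F, q x' ≤ q x) := by
    intro v hv hqv hsub
    refine ⟨{j | Gᵀ.mulVec v j = g j}, v, hsub,
      ⟨fun j hj => hj, ((hFmem v).1 hv).2⟩, mem_vv v hv, ?_, ?_⟩
    · intro z hz
      rw [obj_vv, hqv]
      exact hexact z hz
    · intro x' hx'
      have hx'F : x' ∈ F := hsub hx'
      refine ⟨hx'F, ?_⟩
      intro x hx
      have hdH : Hᵀ.mulVec (x' - v) = 0 := by
        rw [mulVec_sub, hx'.2, ((hFmem v).1 hv).2, sub_self]
      have hdJ : ∀ j, Gᵀ.mulVec v j = g j → Gᵀ.mulVec (x' - v) j = 0 := by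
        intro j hjv
        have := hx'.1 j hjv
        rw [mulVec_sub]
        simp [this, hjv]
      obtain ⟨ε, hε, hp, hm⟩ := eps v hv (x' - v) hdH hdJ
      have hline := L v hv hqv (x' - v) ε hε hp hm 1
      rw [one_smul] at hline
      have hxx : v + (x' - v) = x' := by ext i; simp
      rw [hxx] at hline
      rw [hline]
      exact hopt x hx
  -- induction on the number of inactive constraints
  suffices key : ∀ k : ℕ, ∀ v : Fin n → ℝ, v ∈ F → q v = q xstar →
      (Finset.univ.filter (fun j => Gᵀ.mulVec v j ≠ g j)).card ≤ k →
      (∃ (J : Set (Fin m)) (v : Fin n → ℝ),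
        {x : Fin n → ℝ | (∀ j ∈ J, Gᵀ.mulVec x j = g j) ∧ Hᵀ.mulVec x = h} ⊆ F ∧
        ((∀ j ∈ J, Gᵀ.mulVec v j = g j) ∧ Hᵀ.mulVec v = h) ∧
        (v, vecMulVec v v) ∈ cF ∧
        (∀ z ∈ cF, objR (v, vecMulVec v v) ≤ objR z) ∧
        ∀ x', ((∀ j ∈ J, Gᵀ.mulVec x' j = g j) ∧ Hᵀ.mulVec x' = h) →
          x' ∈ F ∧ ∀ x ∈ F, q x' ≤ q x) by
    exact key m xstar hxstar rfl
      (le_trans (Finset.card_filter_le _ _) (by simp))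
  intro k
  induction k with
  | zero =>
    intro v hv hqv hcard
    have hall : ∀ j, Gᵀ.mulVec v j = g j := by
      intro j
      by_contra hh
      have : j ∈ Finset.univ.filter (fun j => Gᵀ.mulVec v j ≠ g j) := by simp [hh]
      rw [Finset.card_eq_zero.mp (Nat.le_zero.mp hcard)] at this
      exact absurd this (Finset.notMem_empty j)
    apply main v hv hqv
    intro x hx
    rw [hFmem]
    exact ⟨fun j => le_of_eq (hx.1 j (hall j)), hx.2⟩
  | succ k ih =>
    intro v hv hqv hcard
    by_cases hsub : {x : Fin n → ℝ | (∀ j ∈ {j | Gᵀ.mulVec v j = g j}, Gᵀ.mulVec x j = g j)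
        ∧ Hᵀ.mulVec x = h} ⊆ F
    · exact main v hv hqv hsub
    · obtain ⟨x, hxA, hxF⟩ := Set.not_subset.mp hsub
      have hviol : ∃ j₀, g j₀ < Gᵀ.mulVec x j₀ := by
        by_contra hcon
        push_neg at hcon
        exact hxF ((hFmem x).2 ⟨fun j => hcon j, hxA.2⟩)
      obtain ⟨j₀, hj₀⟩ := hviol
      set d := x - v with hd
      have hdH : Hᵀ.mulVec d = 0 := by
        rw [hd, mulVec_sub, hxA.2, ((hFmem v).1 hv).2, sub_self]
      have hdJ : ∀ j, Gᵀ.mulVec v j = g j → Gᵀ.mulVec d j = 0 := by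
        intro j hjv
        have := hxA.1 j hjv
        rw [hd, mulVec_sub]
        simp [this, hjv]
      have hdj₀ : 0 < Gᵀ.mulVec d j₀ := by
        have hvle := ((hFmem v).1 hv).1 j₀
        rw [hd, mulVec_sub]
        simp only [Pi.sub_apply]
        linarith
      set T := Finset.univ.filter (fun j => 0 < Gᵀ.mulVec d j) with hT
      have hj₀T : j₀ ∈ T := by simp [hT, hdj₀]
      have hTne : T.Nonempty := ⟨j₀, hj₀T⟩
      set tstar := T.inf' hTne (fun j => (g j - Gᵀ.mulVec v j) / Gᵀ.mulVec d j) with htstar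
      have hactive_of_T : ∀ j ∈ T, Gᵀ.mulVec v j < g j := by
        intro j hj
        have hdj : 0 < Gᵀ.mulVec d j := (Finset.mem_filter.mp hj).2
        refine lt_of_le_of_ne (((hFmem v).1 hv).1 j) (fun hh => ?_)
        rw [hdJ j hh] at hdj
        exact lt_irrefl 0 hdj
      have htpos : 0 < tstar := by
        rw [htstar, Finset.lt_inf'_iff]
        intro j hj
        exact div_pos (by linarith [hactive_of_T j hj]) (Finset.mem_filter.mp hj).2
      set v' := v + tstar • d with hv'
      have hv'F : v' ∈ F := by
        rw [hFmem]
        constructor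
        · intro j
          simp only [hv', mulVec_add, mulVec_smul, Pi.add_apply, Pi.smul_apply, smul_eq_mul]
          by_cases hdj : 0 < Gᵀ.mulVec d j
          · have hjT : j ∈ T := by simp [hT, hdj]
            have hle := Finset.inf'_le (fun j => (g j - Gᵀ.mulVec v j) / Gᵀ.mulVec d j) hjT
            rw [← htstar] at hle
            rw [le_div_iff₀ hdj] at hle
            linarith
          · push_neg at hdj
            have := ((hFmem v).1 hv).1 j
            nlinarith
        · simp only [hv', mulVec_add, mulVec_smul, hdH, ((hFmem v).1 hv).2]
          ext i; simp
      have hqv' : q v' = q xstar := by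
        obtain ⟨ε, hε, hp, hm⟩ := eps v hv d hdH hdJ
        exact L v hv hqv d ε hε hp hm tstar
      obtain ⟨j₁, hj₁T, hj₁eq⟩ :=
        Finset.exists_mem_eq_inf' hTne (fun j => (g j - Gᵀ.mulVec v j) / Gᵀ.mulVec d j)
      have hd₁ : 0 < Gᵀ.mulVec d j₁ := (Finset.mem_filter.mp hj₁T).2
      have hact₁ : Gᵀ.mulVec v' j₁ = g j₁ := by
        simp only [hv', mulVec_add, mulVec_smul, Pi.add_apply, Pi.smul_apply, smul_eq_mul]
        rw [htstar, hj₁eq, div_mul_cancel₀ _ (ne_of_gt hd₁)]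
        ring
      have hinact₁ : Gᵀ.mulVec v j₁ ≠ g j₁ := ne_of_lt (hactive_of_T j₁ hj₁T)
      have hsubset : Finset.univ.filter (fun j => Gᵀ.mulVec v' j ≠ g j) ⊆
          Finset.univ.filter (fun j => Gᵀ.mulVec v j ≠ g j) := by
        intro j hj
        simp only [Finset.mem_filter, Finset.mem_univ, true_and] at hj ⊢
        intro hcon
        apply hj
        have hd0 := hdJ j hcon
        simp only [hv', mulVec_add, mulVec_smul, Pi.add_apply, Pi.smul_apply, smul_eq_mul,
          hd0, mul_zero, add_zero, hcon]
      have hcard' : (Finset.univ.filter (fun j => Gᵀ.mulVec v' j ≠ g j)).card <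
          (Finset.univ.filter (fun j => Gᵀ.mulVec v j ≠ g j)).card := by
        apply Finset.card_lt_card
        rw [Finset.ssubset_iff_of_subset hsubset]
        exact ⟨j₁, by simp [hinact₁], by simp [hact₁]⟩
      exact ih v' hv'F hqv' (by omega)
end

section
/- Suppose the polyhedron F = {x : G^T x ≤ g, H^T x = h} consists of a single point v (i.e., F = {v}). Then the RLT feasible region 𝓕 = {(x,X) ∈ ℝ^n × S^n : G^T x ≤ g, H^T x = h, H^T X = h x^T, G^T X G − G^T x g^T − g x^T G + g g^T ≥ 0} consists of exactly the single point (v, v v^T). -/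
open Matrix
open scoped RealInnerProductSpace

section Aux

lemma aux_dense {N : ℕ} {ι : Type*} [Fintype ι]
    (b : ι → EuclideanSpace ℝ (Fin N))
    (hb : ∀ w : EuclideanSpace ℝ (Fin N), w ≠ 0 → ∃ i, 0 < ⟪b i, w⟫)
    (x : EuclideanSpace ℝ (Fin N)) :
    x ∈ closure {y : EuclideanSpace ℝ (Fin N) |
      ∃ α : ι → ℝ, (∀ i, 0 ≤ α i) ∧ y = ∑ i, α i • b i} := by
  classical
  set S : Set (EuclideanSpace ℝ (Fin N)) :=
    {y | ∃ α : ι → ℝ, (∀ i, 0 ≤ α i) ∧ y = ∑ i, α i • b i} with hS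
  have hzero : (0 : EuclideanSpace ℝ (Fin N)) ∈ S := ⟨0, fun i => le_refl 0, by simp⟩
  have hgen : ∀ i, b i ∈ S := by
    intro i
    refine ⟨fun j => if j = i then 1 else 0, fun j => by positivity, ?_⟩
    simp [ite_smul]
  let K : ConvexCone ℝ (EuclideanSpace ℝ (Fin N)) :=
    { carrier := S
      smul_mem' := by
        rintro c hc y ⟨α, hα, rfl⟩
        exact ⟨fun i => c * α i, fun i => mul_nonneg hc.le (hα i),
          by simp [Finset.smul_sum, mul_smul]⟩
      add_mem' := by
        rintro y ⟨α, hα, rfl⟩ z ⟨β, hβ, rfl⟩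
        exact ⟨fun i => α i + β i, fun i => add_nonneg (hα i) (hβ i),
          by simp [add_smul, Finset.sum_add_distrib]⟩ }
  by_contra hx
  have hx' : x ∉ K.closure := by
    rw [ConvexCone.mem_closure]; exact hx
  obtain ⟨y, hy1, hy2⟩ := ProperCone.hyperplane_separation'
    (⟨K.closure.toPointedCone (subset_closure hzero), isClosed_closure⟩ :
      ProperCone ℝ (EuclideanSpace ℝ (Fin N))) hx'
  have hyne : -y ≠ 0 := by
    intro h0
    rw [neg_eq_zero] at h0
    rw [h0] at hy2
    simp at hy2
  obtain ⟨i, hi⟩ := hb (-y) hyne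
  have h2 : 0 ≤ ⟪b i, y⟫ := hy1 _ ((ConvexCone.mem_closure).2 (subset_closure (hgen i)))
  rw [inner_neg_right] at hi
  linarith

lemma aux_dense' {N : ℕ} {ι : Type*} [Fintype ι]
    (b : ι → (Fin N → ℝ))
    (hb : ∀ w : Fin N → ℝ, w ≠ 0 → ∃ i, 0 < b i ⬝ᵥ w)
    (x : Fin N → ℝ) :
    x ∈ closure {y : Fin N → ℝ | ∃ α : ι → ℝ, (∀ i, 0 ≤ α i) ∧ y = ∑ i, α i • b i} := by
  classical
  set e := (EuclideanSpace.equiv (Fin N) ℝ).symm with he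
  have happ : ∀ (c : Fin N → ℝ) (i : Fin N), e c i = c i := fun c i => rfl
  have hinner : ∀ c w : Fin N → ℝ, ⟪e c, e w⟫ = c ⬝ᵥ w := by
    intro c w
    simp [PiLp.inner_apply, RCLike.inner_apply, dotProduct, happ]
    exact Finset.sum_congr rfl fun i _ => mul_comm _ _
  have hb' : ∀ w : EuclideanSpace ℝ (Fin N), w ≠ 0 → ∃ i, 0 < ⟪e (b i), w⟫ := by
    intro w hw
    obtain ⟨i, hi⟩ := hb (e.symm w) (by
      intro h0
      apply hw
      have := congrArg e h0
      simpa using this)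
    refine ⟨i, ?_⟩
    have : e (e.symm w) = w := by simp
    rw [← this, hinner]
    exact hi
  have hx := aux_dense (fun i => e (b i)) hb' (e x)
  have himg : {y : EuclideanSpace ℝ (Fin N) | ∃ α : ι → ℝ, (∀ i, 0 ≤ α i) ∧ y = ∑ i, α i • e (b i)}
      = e '' {y : Fin N → ℝ | ∃ α : ι → ℝ, (∀ i, 0 ≤ α i) ∧ y = ∑ i, α i • b i} := by
    ext y
    constructor
    · rintro ⟨α, hα, rfl⟩
      exact ⟨∑ i, α i • b i, ⟨α, hα, rfl⟩, by simp [map_sum]⟩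
    · rintro ⟨z, ⟨α, hα, rfl⟩, rfl⟩
      exact ⟨α, hα, by simp [map_sum]⟩
  rw [himg] at hx
  have himg2 : (⇑e.toHomeomorph '' closure {y : Fin N → ℝ |
        ∃ α : ι → ℝ, (∀ i, 0 ≤ α i) ∧ y = ∑ i, α i • b i})
      = closure (⇑e '' {y : Fin N → ℝ | ∃ α : ι → ℝ, (∀ i, 0 ≤ α i) ∧ y = ∑ i, α i • b i}) :=
    e.toHomeomorph.image_closure _
  rw [← himg2] at hx
  obtain ⟨z, hz, hze⟩ := hx
  have : z = x := e.injective hze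
  rwa [← this]

lemma mul_vmv {p n k : ℕ} (M : Matrix (Fin p) (Fin n) ℝ) (a : Fin n → ℝ) (b : Fin k → ℝ) :
    M * vecMulVec a b = vecMulVec (M.mulVec a) b := by
  ext i j
  simp only [Matrix.mul_apply, vecMulVec_apply, Matrix.mulVec, dotProduct, Finset.sum_mul]
  exact Finset.sum_congr rfl fun l _ => by ring

lemma vmv_mul {n m k : ℕ} (a : Fin k → ℝ) (c : Fin n → ℝ) (G : Matrix (Fin n) (Fin m) ℝ) :
    vecMulVec a c * G = vecMulVec a (Gᵀ.mulVec c) := by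
  ext i j
  simp only [Matrix.mul_apply, vecMulVec_apply, Matrix.mulVec, dotProduct, Finset.mul_sum,
    transpose_apply]
  exact Finset.sum_congr rfl fun l _ => by ring

lemma entry_eq {n m : ℕ} (G : Matrix (Fin n) (Fin m) ℝ) (X : Matrix (Fin n) (Fin n) ℝ)
    (i j : Fin m) :
    (Gᵀ * X * G) i j = (fun k => G k i) ⬝ᵥ X.mulVec (fun k => G k j) := by
  simp only [Matrix.mul_apply, Matrix.mulVec, dotProduct, transpose_apply, Finset.mul_sum,
    Finset.sum_mul]
  rw [Finset.sum_comm]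
  exact Finset.sum_congr rfl fun k _ => Finset.sum_congr rfl fun l _ => by ring

lemma colH_dot {n p : ℕ} (H : Matrix (Fin n) (Fin p) ℝ) (Y : Matrix (Fin n) (Fin n) ℝ)
    (u : Fin n → ℝ) (k : Fin p) :
    (fun r => H r k) ⬝ᵥ Y.mulVec u = ((Hᵀ * Y).mulVec u) k := by
  rw [← Matrix.mulVec_mulVec]
  simp only [Matrix.mulVec, dotProduct, transpose_apply]

lemma B_symm {n : ℕ} (Y : Matrix (Fin n) (Fin n) ℝ) (hY : Yᵀ = Y) (x y : Fin n → ℝ) :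
    x ⬝ᵥ Y.mulVec y = y ⬝ᵥ Y.mulVec x := by
  rw [Matrix.dotProduct_mulVec, ← Matrix.vecMul_transpose, hY, dotProduct_comm]

end Aux

/-- If `F = {v}` is a single point, then the RLT feasible region `𝓕` consists exactly
of the single point `(v, v vᵀ)`. -/
theorem stmt_19 {n m p : ℕ} (G : Matrix (Fin n) (Fin m) ℝ) (H : Matrix (Fin n) (Fin p) ℝ)
    (g : Fin m → ℝ) (h : Fin p → ℝ)
    (F : Set (Fin n → ℝ)) (hF : F = {x | Gᵀ.mulVec x ≤ g ∧ Hᵀ.mulVec x = h})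
    (v : Fin n → ℝ) (hsingle : F = {v})
    (cF : Set ((Fin n → ℝ) × Matrix (Fin n) (Fin n) ℝ))
    (hcF : cF = {z | z.2.IsSymm ∧ Gᵀ.mulVec z.1 ≤ g ∧ Hᵀ.mulVec z.1 = h ∧
      Hᵀ * z.2 = vecMulVec h z.1 ∧
      ∀ i j, 0 ≤ (Gᵀ * z.2 * G - vecMulVec (Gᵀ.mulVec z.1) g
        - vecMulVec g (Gᵀ.mulVec z.1) + vecMulVec g g) i j}) :
    cF = {(v, vecMulVec v v)} := by
  classical
  rw [hF] at hsingle
  subst hcF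
  have hv : Gᵀ.mulVec v ≤ g ∧ Hᵀ.mulVec v = h := by
    have hmem : v ∈ ({v} : Set (Fin n → ℝ)) := rfl
    rw [← hsingle] at hmem
    exact hmem
  obtain ⟨hvG, hvH⟩ := hv
  set a : Fin m → ℝ := Gᵀ.mulVec v with ha
  have hvmv_symm : (vecMulVec v v)ᵀ = vecMulVec v v := by
    ext i j; simp [vecMulVec_apply, mul_comm]
  have hGvvG : Gᵀ * vecMulVec v v * G = vecMulVec a a := by
    rw [mul_vmv, vmv_mul, ← ha]
  apply Set.eq_singleton_iff_unique_mem.mpr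
  constructor
  · -- `(v, v vᵀ)` is feasible
    refine ⟨hvmv_symm, hvG, hvH, by rw [mul_vmv, hvH], ?_⟩
    intro i j
    have h1 : (Gᵀ * vecMulVec v v * G) i j = a i * a j := by rw [hGvvG]; rfl
    simp only [Matrix.sub_apply, Matrix.add_apply, vecMulVec_apply, h1]
    have := mul_nonneg (sub_nonneg.2 (hvG i)) (sub_nonneg.2 (hvG j))
    nlinarith [this]
  · -- uniqueness
    rintro ⟨x, X⟩ ⟨hsym, hxG, hxH, hHX, hineq⟩
    have hxv : x = v := by
      have hmem : x ∈ {x | Gᵀ.mulVec x ≤ g ∧ Hᵀ.mulVec x = h} := ⟨hxG, hxH⟩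
      rw [hsingle] at hmem
      exact hmem
    subst hxv
    set Y : Matrix (Fin n) (Fin n) ℝ := X - vecMulVec x x with hY
    have hYsym : Yᵀ = Y := by
      rw [hY, transpose_sub, hsym.eq, hvmv_symm]
    have hHY : Hᵀ * Y = 0 := by
      rw [hY, Matrix.mul_sub, hHX, mul_vmv, hxH, sub_self]
    have hYHcol : ∀ (k : Fin p) (u : Fin n → ℝ), (fun r => H r k) ⬝ᵥ Y.mulVec u = 0 := by
      intro k u
      rw [colH_dot, hHY, Matrix.zero_mulVec]
      rfl
    have hYG : Gᵀ * Y * G = Gᵀ * X * G - vecMulVec a a := by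
      rw [hY, Matrix.mul_sub, Matrix.sub_mul, hGvvG]
    -- the quadratic form is nonnegative on active columns of G
    have quad : ∀ i j, a i = g i → a j = g j →
        0 ≤ (fun k => G k i) ⬝ᵥ Y.mulVec (fun k => G k j) := by
      intro i j hai haj
      have h0 := hineq i j
      simp only [Matrix.sub_apply, Matrix.add_apply, vecMulVec_apply, ← ha] at h0
      rw [← entry_eq]
      have h1 : (Gᵀ * Y * G) i j = (Gᵀ * X * G) i j - a i * a j := by
        rw [hYG]; simp [Matrix.sub_apply, vecMulVec_apply]
      rw [h1]
      rw [hai, haj] at *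
      linarith
    -- for nonzero w in the nullspace of Hᵀ, some active constraint increases
    have active : ∀ w : Fin n → ℝ, w ≠ 0 → Hᵀ.mulVec w = 0 →
        ∃ i, a i = g i ∧ 0 < Gᵀ.mulVec w i := by
      intro w hw hHw
      by_contra hcon
      push_neg at hcon
      set u : Fin m → ℝ := Gᵀ.mulVec w with hu
      set e : Fin m → ℝ := fun i => if 0 < u i then (g i - a i) / u i else 1 with he
      have hepos : ∀ i, 0 < e i := by
        intro i
        by_cases hui : 0 < u i
        · have hne : a i ≠ g i := by
            intro heq
            exact absurd (hcon i heq) (not_le.2 hui)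
          have hlt : a i < g i := lt_of_le_of_ne (hvG i) hne
          simp only [he, if_pos hui]
          exact div_pos (by linarith) hui
        · simp only [he, if_neg hui]
          exact one_pos
      set s : Finset ℝ := insert 1 (Finset.image e Finset.univ) with hs
      have hsne : s.Nonempty := ⟨1, Finset.mem_insert_self _ _⟩
      set ε : ℝ := s.min' hsne with hε
      have hεpos : 0 < ε := by
        rw [hε, Finset.lt_min'_iff]
        intro y hy
        rw [hs, Finset.mem_insert, Finset.mem_image] at hy
        rcases hy with rfl | ⟨i, _, rfl⟩
        · exact one_pos
        · exact hepos i
      have hεle : ∀ i, ε ≤ e i := by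
        intro i
        apply Finset.min'_le
        rw [hs, Finset.mem_insert, Finset.mem_image]
        exact Or.inr ⟨i, Finset.mem_univ i, rfl⟩
      have hmem : x + ε • w ∈ {x | Gᵀ.mulVec x ≤ g ∧ Hᵀ.mulVec x = h} := by
        constructor
        · intro i
          have hGi : Gᵀ.mulVec (x + ε • w) i = a i + ε * u i := by
            rw [Matrix.mulVec_add, Matrix.mulVec_smul]
            simp [ha, hu]
          rw [hGi]
          by_cases hui : 0 < u i
          · have h2 : ε ≤ (g i - a i) / u i := by
              have h3 := hεle i
              simp only [he] at h3
              rwa [if_pos hui] at h3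
            have := (le_div_iff₀ hui).1 h2
            linarith
          · have h2 : ε * u i ≤ 0 := mul_nonpos_of_nonneg_of_nonpos hεpos.le (not_lt.1 hui)
            have := hvG i
            linarith
        · rw [Matrix.mulVec_add, Matrix.mulVec_smul, hxH, hHw]
          simp
      rw [hsingle] at hmem
      have heq : x + ε • w = x := hmem
      have : ε • w = 0 := by
        have := congrArg (fun z => z - x) heq
        simpa [add_sub_cancel_left] using this
      rcases smul_eq_zero.1 this with h1 | h1
      · exact absurd h1 (ne_of_gt hεpos)
      · exact hw h1
    -- set up the generators
    set ι := (Fin m) ⊕ ((Fin p) ⊕ (Fin p)) with hι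
    set b : ι → (Fin n → ℝ) := Sum.elim (fun i => if a i = g i then (fun k => G k i) else 0)
      (Sum.elim (fun k => (fun r => H r k)) (fun k => (fun r => -H r k))) with hb
    have hGcol : ∀ (w : Fin n → ℝ) (i : Fin m), (fun k => G k i) ⬝ᵥ w = Gᵀ.mulVec w i := by
      intro w i
      simp [Matrix.mulVec, dotProduct, transpose_apply]
    have hHcol : ∀ (w : Fin n → ℝ) (k : Fin p), (fun r => H r k) ⬝ᵥ w = Hᵀ.mulVec w k := by
      intro w k
      simp [Matrix.mulVec, dotProduct, transpose_apply]
    have hbw : ∀ w : Fin n → ℝ, w ≠ 0 → ∃ i, 0 < b i ⬝ᵥ w := by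
      intro w hw
      by_cases hHw : Hᵀ.mulVec w = 0
      · obtain ⟨i, hai, hpos⟩ := active w hw hHw
        refine ⟨Sum.inl i, ?_⟩
        simp only [hb, Sum.elim_inl, if_pos hai]
        rw [hGcol]
        exact hpos
      · obtain ⟨k, hk⟩ := Function.ne_iff.1 hHw
        rcases lt_or_gt_of_ne hk with hneg | hpos
        · refine ⟨Sum.inr (Sum.inr k), ?_⟩
          simp only [hb, Sum.elim_inr]
          have : (fun r => -H r k) ⬝ᵥ w = -(Hᵀ.mulVec w k) := by
            rw [← hHcol]
            simp [dotProduct, Finset.sum_neg_distrib]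
          rw [this]
          simpa using hneg
        · refine ⟨Sum.inr (Sum.inl k), ?_⟩
          simp only [hb, Sum.elim_inr, Sum.elim_inl]
          rw [hHcol]
          exact hpos
    -- the quadratic form is nonnegative on all pairs of generators
    have hBgen : ∀ i j : ι, 0 ≤ b i ⬝ᵥ Y.mulVec (b j) := by
      have hBH : ∀ (k : Fin p) (u : Fin n → ℝ), (fun r => -H r k) ⬝ᵥ Y.mulVec u = 0 := by
        intro k u
        have : (fun r => -H r k) = -(fun r => H r k) := by funext r; simp
        rw [this, neg_dotProduct, hYHcol, neg_zero]
      have hright : ∀ (j : ι) (x : Fin n → ℝ),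
          (∃ k, b j = (fun r => H r k)) ∨ (∃ k, b j = (fun r => -H r k)) →
          b j ⬝ᵥ Y.mulVec x = 0 := by
        rintro j x (⟨k, hk⟩ | ⟨k, hk⟩)
        · rw [hk]; exact hYHcol k x
        · rw [hk]; exact hBH k x
      intro i j
      rcases j with j | j | j
      · rcases i with i | i | i
        · by_cases hai : a i = g i
          · by_cases haj : a j = g j
            · simp only [hb, Sum.elim_inl, if_pos hai, if_pos haj]
              exact quad i j hai haj
            · simp only [hb, Sum.elim_inl, if_neg haj]
              rw [Matrix.mulVec_zero, dotProduct_zero]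
          · simp only [hb, Sum.elim_inl, if_neg hai]
            rw [zero_dotProduct]
        · simp only [hb, Sum.elim_inr, Sum.elim_inl]
          rw [hYHcol]
        · simp only [hb, Sum.elim_inr]
          rw [hBH]
      · simp only [hb, Sum.elim_inr, Sum.elim_inl]
        rw [B_symm Y hYsym, hYHcol]
      · simp only [hb, Sum.elim_inr]
        rw [B_symm Y hYsym, hBH]
    -- the quadratic form is nonnegative on the cone generated by `b`
    set Kset : Set (Fin n → ℝ) :=
      {y | ∃ α : ι → ℝ, (∀ i, 0 ≤ α i) ∧ y = ∑ i, α i • b i} with hKset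
    have hexpand0 : ∀ (α : ι → ℝ) (u : Fin n → ℝ),
        (∑ i, α i • b i) ⬝ᵥ u = ∑ i, α i * (b i ⬝ᵥ u) := by
      intro α u
      simp only [dotProduct, Finset.sum_apply, Pi.smul_apply, smul_eq_mul, Finset.sum_mul,
        Finset.mul_sum]
      rw [Finset.sum_comm]
      exact Finset.sum_congr rfl fun i _ => Finset.sum_congr rfl fun k _ => by ring
    have hexpand : ∀ (α : ι → ℝ) (u : Fin n → ℝ),
        (∑ i, α i • b i) ⬝ᵥ Y.mulVec u = ∑ i, α i * (b i ⬝ᵥ Y.mulVec u) := fun α u =>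
      hexpand0 α (Y.mulVec u)
    have hexpand2 : ∀ (α : ι → ℝ) (x : Fin n → ℝ),
        x ⬝ᵥ Y.mulVec (∑ i, α i • b i) = ∑ i, α i * (x ⬝ᵥ Y.mulVec (b i)) := by
      intro α x
      rw [B_symm Y hYsym, hexpand]
      exact Finset.sum_congr rfl fun i _ => by rw [B_symm Y hYsym]
    have hKB : ∀ x ∈ Kset, ∀ y ∈ Kset, 0 ≤ x ⬝ᵥ Y.mulVec y := by
      rintro x ⟨α, hα, rfl⟩ y ⟨β, hβ, rfl⟩
      rw [hexpand]
      apply Finset.sum_nonneg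
      intro i _
      apply mul_nonneg (hα i)
      rw [hexpand2]
      apply Finset.sum_nonneg
      intro j _
      exact mul_nonneg (hβ j) (hBgen i j)
    -- pass to the closure: the form is nonnegative everywhere
    have hBcont : ∀ y : Fin n → ℝ, Continuous fun x : Fin n → ℝ => x ⬝ᵥ Y.mulVec y := by
      intro y
      simp only [dotProduct]
      exact continuous_finset_sum _ fun k _ =>
        ((continuous_apply k).mul continuous_const)
    have hBcont2 : ∀ x : Fin n → ℝ, Continuous fun y : Fin n → ℝ => x ⬝ᵥ Y.mulVec y := by
      intro x
      have : (fun y : Fin n → ℝ => x ⬝ᵥ Y.mulVec y) = fun y => y ⬝ᵥ Y.mulVec x := by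
        funext y; exact B_symm Y hYsym x y
      rw [this]
      exact hBcont x
    have hclos : ∀ x : Fin n → ℝ, x ∈ closure Kset := fun x => aux_dense' b hbw x
    have hstep1 : ∀ y ∈ Kset, ∀ x : Fin n → ℝ, 0 ≤ x ⬝ᵥ Y.mulVec y := by
      intro y hy x
      have hsub : closure Kset ⊆ (fun x : Fin n → ℝ => x ⬝ᵥ Y.mulVec y) ⁻¹' Set.Ici 0 := by
        apply closure_minimal
        · intro x hx
          exact hKB x hx y hy
        · exact (isClosed_Ici).preimage (hBcont y)
      exact hsub (hclos x)
    have hall : ∀ x y : Fin n → ℝ, 0 ≤ x ⬝ᵥ Y.mulVec y := by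
      intro x y
      have hsub : closure Kset ⊆ (fun y : Fin n → ℝ => x ⬝ᵥ Y.mulVec y) ⁻¹' Set.Ici 0 := by
        apply closure_minimal
        · intro y hy
          exact hstep1 y hy x
        · exact (isClosed_Ici).preimage (hBcont2 x)
      exact hsub (hclos y)
    -- conclude `Y = 0`
    have hYzero : Y = 0 := by
      ext i j
      have h1 := hall (Pi.single i 1) (Pi.single j 1)
      have h2 := hall (Pi.single i 1) (-(Pi.single j 1))
      have he1 : (Pi.single i 1 : Fin n → ℝ) ⬝ᵥ Y.mulVec (Pi.single j 1) = Y i j := by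
        rw [Matrix.mulVec_single]
        simp [dotProduct, Pi.single_apply, ite_mul, Finset.sum_ite_eq]
      have he2 : (Pi.single i 1 : Fin n → ℝ) ⬝ᵥ Y.mulVec (-(Pi.single j 1)) = -(Y i j) := by
        rw [Matrix.mulVec_neg, dotProduct_neg, he1]
      rw [he1] at h1
      rw [he2] at h2
      simp only [Matrix.zero_apply]
      linarith
    have hXeq : X = vecMulVec x x := by
      have := hYzero
      rw [hY] at this
      exact sub_eq_zero.1 this
    rw [hXeq]
end
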